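/- arXiv:2212.14609 — 2 statements merged into one kernel-verified Lean document; each statement's English description precedes it below -/
import Mathlib

section
/- Let n and r be positive integers and let γ : {1,…,n} → {0,1,…,r−1} be a function. Let (ã_{ij}) be an n×n matrix with entries in the formal power series ring ℂ[[z]]. Define an n×n matrix A with entries in ℂ[[t]] by A_{ij} = t^{r−γ(j)−1+γ(i)}·ã_{ij}(t^r) when γ(i) ≤ γ(j), and A_{ij} = t^{γ(i)−1−γ(j)}·ã_{ij}(t^r) when γ(i) > γ(j); define an n×n matrix Ā with entries in ℂ[[z]] by Ā_{ij} = (1/r)·z·ã_{ij}(z) when γ(i) ≤ γ(j), and Ā_{ij} = (1/r)·ã_{ij}(z) when γ(i) > γ(j). Write the characteristic polynomials as det(λI − A) = λ^n + a_1(t)λ^{n−1} + ⋯ + a_n(t) and det(λI − Ā) = λ^n + ā_1(z)λ^{n−1} + ⋯ + ā_n(z). Then for every 1 ≤ k ≤ n one has the identity t^k·a_k(t) = r^k·ā_k(t^r) in ℂ[[t]]. -/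
/-!
Conjugating by `E = diag(t^{γ(i)})` gives `(t • A) * E = E * M`, where `M` is `r • Ā` with
`z` replaced by `t^r`. As `det E` is a nonzero power of `t`, `t • A` and `M` have the same
characteristic polynomial. Scaling a matrix by `c` multiplies the coefficient of `λ^{n-k}` of
its characteristic polynomial by `c^k` (the reversed characteristic polynomial `det(1 - λ M)`
only sees `λ M`), which turns this equality into `t^k a_k(t) = r^k ā_k(t^r)`.
-/

/-- The power series `g(t^r)` obtained from `g ∈ ℂ[[z]]` by the substitution `z ↦ t^r`. -/
noncomputable def substPow (r : ℕ) (g : PowerSeries ℂ) : PowerSeries ℂ :=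
  PowerSeries.mk fun k => if r ∣ k then PowerSeries.coeff (k / r) g else 0

theorem substPow_eq_expand {r : ℕ} (hr : r ≠ 0) (g : PowerSeries ℂ) :
    substPow r g = PowerSeries.expand r hr g := by
  ext k
  rw [PowerSeries.coeff_expand, substPow, PowerSeries.coeff_mk]

section

open Polynomial

theorem Polynomial.coeff_comp_C_mul_X {R : Type*} [CommSemiring R] (p : R[X]) (c : R) (m : ℕ) :
    (p.comp (C c * X)).coeff m = c ^ m * p.coeff m := by
  induction p using Polynomial.induction_on' with
  | add p q hp hq => simp [hp, hq, mul_add]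
  | monomial k a =>
    rw [monomial_comp, mul_pow, ← C_pow, ← mul_assoc, ← C_mul, coeff_C_mul, coeff_X_pow,
      coeff_monomial]
    by_cases h : m = k
    · subst h; simp [mul_comm]
    · simp [h, Ne.symm h]

namespace Matrix

variable {ι R : Type*} [Fintype ι] [DecidableEq ι] [CommRing R]

theorem charpolyRev_smul (c : R) (M : Matrix ι ι R) :
    (c • M).charpolyRev = M.charpolyRev.comp (C c * X) := by
  rw [charpolyRev, charpolyRev, ← coe_compRingHom_apply, RingHom.map_det]
  congr 1
  ext1 i j
  rcases eq_or_ne i j with rfl | h <;> simp [one_apply_ne, *] <;> ring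

theorem coeff_charpoly_eq_coeff_charpolyRev (M : Matrix ι ι R) {k : ℕ}
    (hk : k ≤ Fintype.card ι) :
    M.charpoly.coeff (Fintype.card ι - k) = M.charpolyRev.coeff k := by
  nontriviality R
  rw [← reverse_charpoly, coeff_reverse, charpoly_natDegree_eq_dim, revAt_le hk]

theorem coeff_charpoly_smul (c : R) (M : Matrix ι ι R) {k : ℕ} (hk : k ≤ Fintype.card ι) :
    (c • M).charpoly.coeff (Fintype.card ι - k) =
      c ^ k * M.charpoly.coeff (Fintype.card ι - k) := by
  rw [coeff_charpoly_eq_coeff_charpolyRev _ hk, coeff_charpoly_eq_coeff_charpolyRev _ hk,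
    charpolyRev_smul, coeff_comp_C_mul_X]

theorem charpoly_eq_of_mul_eq_mul {P Q E : Matrix ι ι R} (h : P * E = E * Q)
    (hE : E.det ∈ nonZeroDivisors R) : P.charpoly = Q.charpoly := by
  have hCE : C E.det ∈ nonZeroDivisors R[X] := mem_nonzeroDivisors_of_coeff_mem 0 (by simpa)
  have hcharmatrix : P.charmatrix * C.mapMatrix E = C.mapMatrix E * Q.charmatrix := by
    simp only [charmatrix, sub_mul, mul_sub, ← map_mul, h,
      (scalar_commute (X : R[X]) (fun _ ↦ Commute.all _ _) _).eq]
  rw [← mul_cancel_right_mem_nonZeroDivisors hCE]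
  have := congrArg det hcharmatrix
  rwa [det_mul, det_mul, ← RingHom.map_det, mul_comm (C _)] at this

end Matrix

end

open PowerSeries in
theorem X_smul_mul_diagonal_eq {n r : ℕ} (hr : r ≠ 0) {γ : Fin n → ℕ} (hγ : ∀ i, γ i < r)
    {atil : Fin n → Fin n → PowerSeries ℂ} {A Abar : Matrix (Fin n) (Fin n) (PowerSeries ℂ)}
    (hA : ∀ i j, A i j =
      if γ i ≤ γ j then X ^ (r - γ j - 1 + γ i) * expand r hr (atil i j)
      else X ^ (γ i - 1 - γ j) * expand r hr (atil i j))
    (hAbar : ∀ i j, Abar i j =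
      if γ i ≤ γ j then C (1 / (r : ℂ)) * X * atil i j else C (1 / (r : ℂ)) * atil i j) :
    ((X : PowerSeries ℂ) • A) * Matrix.diagonal (fun i => X ^ γ i) =
      Matrix.diagonal (fun i => X ^ γ i) * ((C (r : ℂ) • Abar).map (expand r hr)) := by
  have hscale : ∀ f, C (r : ℂ) * (C (1 / (r : ℂ)) * f) = f := fun f ↦ by
    rw [← mul_assoc, ← map_mul, mul_one_div_cancel (Nat.cast_ne_zero.mpr hr), map_one, one_mul]
  ext1 i j
  simp only [Matrix.mul_diagonal, Matrix.diagonal_mul, Matrix.smul_apply, Matrix.map_apply,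
    smul_eq_mul, hA, hAbar, mul_assoc]
  split_ifs with h
  · have hexp : 1 + (r - γ j - 1 + γ i) + γ j = γ i + r := by have := hγ j; omega
    rw [hscale, map_mul, expand_X]
    calc _ = X ^ (1 + (r - γ j - 1 + γ i) + γ j) * expand r hr (atil i j) := by ring
      _ = _ := by rw [hexp]; ring
  · have hexp : 1 + (γ i - 1 - γ j) + γ j = γ i := by omega
    rw [hscale]
    calc _ = X ^ (1 + (γ i - 1 - γ j) + γ j) * expand r hr (atil i j) := by ring
      _ = _ := by rw [hexp]

theorem stmt4_general (n r : ℕ) (hr : 0 < r)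
    (γ : Fin n → ℕ) (hγ : ∀ i, γ i < r)
    (atil : Fin n → Fin n → PowerSeries ℂ)
    (A Abar : Matrix (Fin n) (Fin n) (PowerSeries ℂ))
    (hA : ∀ i j, A i j =
      if γ i ≤ γ j then PowerSeries.X ^ (r - γ j - 1 + γ i) * substPow r (atil i j)
      else PowerSeries.X ^ (γ i - 1 - γ j) * substPow r (atil i j))
    (hAbar : ∀ i j, Abar i j =
      if γ i ≤ γ j then PowerSeries.C (1 / (r : ℂ)) * PowerSeries.X * atil i j
      else PowerSeries.C (1 / (r : ℂ)) * atil i j) :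
    ∀ k : ℕ, 1 ≤ k → k ≤ n →
      PowerSeries.X ^ k * (Matrix.charpoly A).coeff (n - k) =
        PowerSeries.C (r : ℂ) ^ k * substPow r ((Matrix.charpoly Abar).coeff (n - k)) := by
  intro k _ hk
  simp only [substPow_eq_expand hr.ne'] at hA ⊢
  have hdet : (Matrix.diagonal fun i => PowerSeries.X ^ γ i : Matrix (Fin n) (Fin n) _).det ∈
      nonZeroDivisors (PowerSeries ℂ) := by
    rw [Matrix.det_diagonal]
    exact mem_nonZeroDivisors_of_ne_zero
      (Finset.prod_ne_zero_iff.mpr fun i _ ↦ pow_ne_zero _ PowerSeries.X_ne_zero)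
  have hcharpoly :=
    Matrix.charpoly_eq_of_mul_eq_mul (X_smul_mul_diagonal_eq hr.ne' hγ hA hAbar) hdet
  have hk' : k ≤ Fintype.card (Fin n) := by simpa using hk
  have hA_coeff := Matrix.coeff_charpoly_smul PowerSeries.X A hk'
  have hAbar_coeff := Matrix.coeff_charpoly_smul (PowerSeries.C (r : ℂ)) Abar hk'
  rw [Fintype.card_fin] at hA_coeff hAbar_coeff
  rw [← hA_coeff, hcharpoly, ← AlgHom.coe_toRingHom, Matrix.charpoly_map, Polynomial.coeff_map,
    hAbar_coeff, map_mul, map_pow, AlgHom.coe_toRingHom, PowerSeries.expand_C]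

/-- The paper's relation (rela char) comparing the characteristic polynomial of a
`μ_r`-equivariant Higgs field on `Spec ℂ[[t]]` with that of its pushforward to the coarse
disc `Spec ℂ[[z]]`, `z = t^r`: writing `det(λI − A) = λ^n + a_1(t)λ^{n−1} + ⋯ + a_n(t)` and
`det(λI − Ā) = λ^n + ā_1(z)λ^{n−1} + ⋯ + ā_n(z)`, one has
`t^k · a_k(t) = r^k · ā_k(t^r)` for `1 ≤ k ≤ n`. -/
theorem stmt4 (n r : ℕ) (hn : 0 < n) (hr : 0 < r)
    (γ : Fin n → ℕ) (hγ : ∀ i, γ i < r)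
    (atil : Fin n → Fin n → PowerSeries ℂ)
    (A Abar : Matrix (Fin n) (Fin n) (PowerSeries ℂ))
    (hA : ∀ i j, A i j =
      if γ i ≤ γ j then PowerSeries.X ^ (r - γ j - 1 + γ i) * substPow r (atil i j)
      else PowerSeries.X ^ (γ i - 1 - γ j) * substPow r (atil i j))
    (hAbar : ∀ i j, Abar i j =
      if γ i ≤ γ j then PowerSeries.C (1 / (r : ℂ)) * PowerSeries.X * atil i j
      else PowerSeries.C (1 / (r : ℂ)) * atil i j) :
    ∀ k : ℕ, 1 ≤ k → k ≤ n →
      PowerSeries.X ^ k * (Matrix.charpoly A).coeff (n - k) =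
        PowerSeries.C (r : ℂ) ^ k * substPow r ((Matrix.charpoly Abar).coeff (n - k)) :=
  stmt4_general n r hr γ hγ atil A Abar hA hAbar
end

section
/- Let A be a commutative ℂ-algebra, let r ≤ s be positive integers, and let f, a_1, …, a_r ∈ A. Let I ⊆ A[t,y] be the ideal generated by y^r + a_1·t^{s−1}·y^{r−1} + a_2·t^{s−2}·y^{r−2} + ⋯ + a_r·t^{s−r} and t^s − f, and set B = A[t,y]/I. The group μ_s of complex s-th roots of unity acts on B by A-algebra automorphisms determined by ζ·t = ζt and ζ·y = ζ^{−1}y (this is well defined because I is stable under these substitutions). Then the A-algebra homomorphism A[w]/(w^r + a_1·f·w^{r−1} + a_2·f·w^{r−2} + ⋯ + a_r·f) → B sending w to the class of t·y is injective, and its image is exactly the subalgebra B^{μ_s} of μ_s-invariant elements of B. -/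
/-!
`B` arises from `A` by two monic extensions: first `A[t]/(t^s - f)`, then a root `y` of
`y^r + a₁ t^{s-1} y^{r-1} + ⋯ + a_r t^{s-r}`. So it is a free `A`-module with basis `t^i y^j`
(`i < s`, `j < r`). The action of `ζ ∈ μ_s` is diagonal in this basis with eigenvalue
`ζ^i ζ^{-j}`, and for a primitive `ζ` this equals `1` only when `i = j`, because `i, j < s`. Hence the invariants are
the `A`-span of the `(ty)^j = t^j y^j`, `j < r`, which is the image of `w ↦ ty`. Those `r`
powers being linearly independent, the kernel of `w ↦ ty` is generated by the monic relation
of degree `r` that `ty` satisfies: `t^r` times the relation of `y`.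
-/

open MvPolynomial

namespace Polynomial

variable {R : Type*} [CommRing R]

noncomputable def monicWithCoeffs {n : ℕ} (c : Fin n → R) : R[X] :=
  X ^ n + ∑ i : Fin n, C (c i) * X ^ (n - ((i : ℕ) + 1))

theorem degree_sum_C_mul_X_pow_rev_lt {n : ℕ} (c : Fin n → R) :
    (∑ i : Fin n, C (c i) * X ^ (n - ((i : ℕ) + 1))).degree < (n : WithBot ℕ) := by
  have hrev (i : Fin n) : n - ((i.rev : ℕ) + 1) = i := by rw [Fin.val_rev]; omega
  rw [← Equiv.sum_comp Fin.revPerm]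
  simpa only [Fin.revPerm_apply, hrev] using degree_sum_fin_lt fun i => c i.rev

theorem monic_monicWithCoeffs {n : ℕ} (c : Fin n → R) : (monicWithCoeffs c).Monic :=
  monic_X_pow_add (degree_sum_C_mul_X_pow_rev_lt c)

theorem natDegree_monicWithCoeffs [Nontrivial R] {n : ℕ} (c : Fin n → R) :
    (monicWithCoeffs c).natDegree = n := by
  rw [monicWithCoeffs, natDegree_add_eq_left_of_degree_lt, natDegree_X_pow]
  rw [degree_X_pow]
  exact degree_sum_C_mul_X_pow_rev_lt c

theorem eval₂_monicWithCoeffs {S : Type*} [CommRing S] (φ : R →+* S) (x : S) {n : ℕ}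
    (c : Fin n → R) :
    (monicWithCoeffs c).eval₂ φ x =
      x ^ n + ∑ i : Fin n, φ (c i) * x ^ (n - ((i : ℕ) + 1)) := by
  simp [monicWithCoeffs, eval₂_finsetSum]

theorem ker_aeval_eq_span_of_linearIndependent {S : Type*} [CommRing S] [Algebra R S]
    {q : R[X]} (hq : q.Monic) {n : ℕ} (hn : q.natDegree = n) {w : S} (hw : aeval w q = 0)
    (hli : LinearIndependent R fun i : Fin n => w ^ (i : ℕ)) :
    RingHom.ker (aeval w) = Ideal.span {q} := by
  nontriviality R
  refine le_antisymm (fun p hp => ?_) ((Ideal.span_singleton_le_iff_mem _).2 hw)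
  have hrem : aeval w (p %ₘ q) = 0 := by
    rw [modByMonic_eq_sub_mul_div p, map_sub, map_mul, RingHom.mem_ker.1 hp, hw, zero_mul,
      sub_zero]
  have hmod : p %ₘ q = 0 := by
    by_contra hne
    have hlt : (p %ₘ q).natDegree < n :=
      hn ▸ natDegree_lt_natDegree hne (degree_modByMonic_lt p hq)
    have hcoeff := Fintype.linearIndependent_iff.1 hli (fun i => (p %ₘ q).coeff i) (by
      rw [Fin.sum_univ_eq_sum_range (fun i => (p %ₘ q).coeff i • w ^ i),
        ← aeval_eq_sum_range' hlt, hrem])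
    exact hne (leadingCoeff_eq_zero.1 (hcoeff ⟨_, hlt⟩))
  exact Ideal.mem_span_singleton.2 ((modByMonic_eq_zero_iff_dvd hq).1 hmod)

end Polynomial

theorem Module.Basis.repr_eq_zero_of_fixed_of_apply_eq_smul {ι R M : Type*} [Fintype ι]
    [CommRing R] [AddCommGroup M] [Module R M] (v : Module.Basis ι R M) {φ : M →ₗ[R] M}
    {μ : ι → R} (hφ : ∀ i, φ (v i) = μ i • v i) {b : M} (hb : φ b = b) {i : ι}
    (hi : IsUnit (μ i - 1)) :
    v.repr b i = 0 := by
  have hφb : φ b = ∑ k, (μ k * v.repr b k) • v k :=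
    calc φ b = φ (∑ k, v.repr b k • v k) := by rw [v.sum_repr]
      _ = _ := by simp only [map_sum, map_smul, hφ, smul_smul, mul_comm]
  have key : v.repr (φ b) i = μ i * v.repr b i := by rw [hφb, v.repr_sum_self]
  rw [← hi.mul_right_eq_zero, sub_mul, ← key, hb, one_mul, sub_self]

theorem pow_sub_mul_inv_pow_eq_inv_pow {M : Type*} [DivisionMonoid M] {ζ : M} {n r s : ℕ}
    (hζ : ζ ^ s = 1) (hns : n ≤ s) (hnr : n ≤ r) :
    ζ ^ (s - n) * ζ⁻¹ ^ (r - n) = ζ⁻¹ ^ r := by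
  have hinv : ζ ^ (s - n) = ζ⁻¹ ^ n := by
    rw [inv_pow]
    exact eq_inv_of_mul_eq_one_left (by rw [← pow_add, Nat.sub_add_cancel hns, hζ])
  rw [hinv, ← pow_add, Nat.add_sub_cancel' hnr]

theorem IsPrimitiveRoot.isUnit_algebraMap_pow_mul_inv_pow_sub_one {A K : Type*} [CommRing A]
    [Field K] [Algebra K A] {s : ℕ} {ζ : K} (hζ : IsPrimitiveRoot ζ s) {i j : ℕ} (hi : i < s)
    (hj : j < s) (hij : i ≠ j) :
    IsUnit (algebraMap K A (ζ ^ i * ζ⁻¹ ^ j) - 1) := by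
  rw [← map_one (algebraMap K A), ← map_sub]
  refine (isUnit_iff_ne_zero.2 (sub_ne_zero.2 fun h => hij (hζ.pow_inj hi hj ?_))).map _
  rwa [inv_pow, mul_inv_eq_one₀ (pow_ne_zero _ (hζ.ne_zero (by omega)))] at h

noncomputable section

section AntidiagScaling

variable {A : Type*} [CommRing A] {K : Type*} [Field K] [Algebra K A]

variable (K) in
def antidiagScaling (ζ : K) : MvPolynomial (Fin 2) A →ₐ[A] MvPolynomial (Fin 2) A :=
  aeval fun i => if i = 0 then C (algebraMap K A ζ) * X 0 else C (algebraMap K A ζ⁻¹) * X 1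

theorem antidiagScaling_X_pow_mul_X_pow (ζ : K) (i j : ℕ) :
    antidiagScaling K ζ (X 0 ^ i * X 1 ^ j : MvPolynomial (Fin 2) A) =
      C (algebraMap K A (ζ ^ i * ζ⁻¹ ^ j)) * (X 0 ^ i * X 1 ^ j) := by
  rw [map_mul (algebraMap K A), map_pow, map_pow, C_mul, C_pow, C_pow]
  simp [antidiagScaling, mul_pow]
  ring

theorem antidiagScaling_X_mul_X {ζ : K} (hζ : ζ ≠ 0) :
    antidiagScaling K ζ (X 0 * X 1 : MvPolynomial (Fin 2) A) = X 0 * X 1 := by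
  simpa [hζ] using antidiagScaling_X_pow_mul_X_pow (A := A) ζ 1 1

end AntidiagScaling

variable {A : Type*} [CommRing A] {r : ℕ} (s : ℕ) (f : A) (a : Fin r → A)

def spectralIdeal : Ideal (MvPolynomial (Fin 2) A) :=
  Ideal.span
    {X 1 ^ r + ∑ i : Fin r, C (a i) * X 0 ^ (s - ((i : ℕ) + 1)) * X 1 ^ (r - ((i : ℕ) + 1)),
      X 0 ^ s - C f}

abbrev SpectralAlgebra := MvPolynomial (Fin 2) A ⧸ spectralIdeal s f a

local notation "mkS" => Ideal.Quotient.mk (spectralIdeal s f a)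

theorem spectralIdeal_le_ker_aeval {T : Type*} [CommRing T] [Algebra A T] {x y : T}
    (hx : x ^ s = algebraMap A T f)
    (hy : y ^ r + ∑ i : Fin r, algebraMap A T (a i) * x ^ (s - ((i : ℕ) + 1)) *
      y ^ (r - ((i : ℕ) + 1)) = 0) :
    spectralIdeal s f a ≤ RingHom.ker (aeval ![x, y]) := by
  rw [spectralIdeal, Ideal.span_le]
  rintro _ (rfl | rfl)
  · simpa using hy
  · simp [hx]

theorem spectralIdeal_le_comap_antidiagScaling {K : Type*} [Field K] [Algebra K A]
    (hrs : r ≤ s) {ζ : K} (hζ : ζ ^ s = 1) :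
    spectralIdeal s f a ≤ (spectralIdeal s f a).comap (antidiagScaling K ζ) := by
  rw [spectralIdeal, Ideal.span_le]
  rintro _ (rfl | rfl) <;> rw [SetLike.mem_coe, Ideal.mem_comap]
  · have hscale : antidiagScaling K ζ (X 1 ^ r + ∑ i : Fin r,
          C (a i) * X 0 ^ (s - ((i : ℕ) + 1)) * X 1 ^ (r - ((i : ℕ) + 1))) =
        C (algebraMap K A (ζ⁻¹ ^ r)) * (X 1 ^ r + ∑ i : Fin r,
          C (a i) * X 0 ^ (s - ((i : ℕ) + 1)) * X 1 ^ (r - ((i : ℕ) + 1))) := by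
      simp only [map_add, map_sum, mul_add, Finset.mul_sum]
      congr 1
      · simpa using antidiagScaling_X_pow_mul_X_pow (A := A) ζ 0 r
      · refine Finset.sum_congr rfl fun i _ => ?_
        rw [mul_assoc, map_mul, antidiagScaling_X_pow_mul_X_pow,
          pow_sub_mul_inv_pow_eq_inv_pow hζ (by omega) (by omega)]
        simp [antidiagScaling]
        ring
    rw [hscale]
    exact Ideal.mul_mem_left _ _ (Ideal.subset_span (by simp))
  · have hscale : antidiagScaling K ζ (X 0 ^ s - C f) = X 0 ^ s - C f := by
      simpa [hζ] using congrArg (· - C f) (antidiagScaling_X_pow_mul_X_pow (A := A) ζ s 0)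
    rw [hscale]
    exact Ideal.subset_span (by simp)

namespace SpectralAlgebra

theorem mk_X_zero_pow : mkS (X 0) ^ s = algebraMap A (SpectralAlgebra s f a) f := by
  have : X 0 ^ s - C f ∈ spectralIdeal s f a := Ideal.subset_span (by simp)
  rwa [← Ideal.Quotient.eq_zero_iff_mem, map_sub, map_pow, sub_eq_zero] at this

theorem mk_X_one_pow_add_sum :
    mkS (X 1) ^ r + ∑ i : Fin r, algebraMap A (SpectralAlgebra s f a) (a i) *
      mkS (X 0) ^ (s - ((i : ℕ) + 1)) * mkS (X 1) ^ (r - ((i : ℕ) + 1)) = 0 := by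
  have : X 1 ^ r + ∑ i : Fin r,
      C (a i) * X 0 ^ (s - ((i : ℕ) + 1)) * X 1 ^ (r - ((i : ℕ) + 1)) ∈ spectralIdeal s f a :=
    Ideal.subset_span (by simp)
  rw [← Ideal.Quotient.eq_zero_iff_mem] at this
  simp only [map_add, map_sum, map_mul, map_pow] at this
  exact this

abbrev BaseRing := AdjoinRoot (Polynomial.X ^ s - Polynomial.C f)

theorem root_pow_eq_of :
    AdjoinRoot.root (Polynomial.X ^ s - Polynomial.C f) ^ s = AdjoinRoot.of _ f := by
  have := AdjoinRoot.eval₂_root (Polynomial.X ^ s - Polynomial.C f)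
  rwa [Polynomial.eval₂_sub, Polynomial.eval₂_X_pow, Polynomial.eval₂_C, sub_eq_zero] at this

def fiberPoly : Polynomial (BaseRing s f) :=
  Polynomial.monicWithCoeffs fun i =>
    AdjoinRoot.of _ (a i) * AdjoinRoot.root _ ^ (s - ((i : ℕ) + 1))

theorem monic_fiberPoly : (fiberPoly s f a).Monic := Polynomial.monic_monicWithCoeffs _

def toTower : SpectralAlgebra s f a →ₐ[A] AdjoinRoot (fiberPoly s f a) :=
  Ideal.Quotient.liftₐ _ (aeval ![AdjoinRoot.of _ (AdjoinRoot.root _), AdjoinRoot.root _])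
    fun p hp => by
      refine spectralIdeal_le_ker_aeval s f a ?_ ?_ hp
      · rw [← map_pow, root_pow_eq_of, IsScalarTower.algebraMap_apply A (BaseRing s f),
          AdjoinRoot.algebraMap_eq, AdjoinRoot.algebraMap_eq]
      · have := AdjoinRoot.eval₂_root (fiberPoly s f a)
        rw [fiberPoly, Polynomial.eval₂_monicWithCoeffs] at this
        simp only [IsScalarTower.algebraMap_apply A (BaseRing s f), AdjoinRoot.algebraMap_eq,
          map_mul, map_pow] at this ⊢
        exact this

theorem toTower_mk (p : MvPolynomial (Fin 2) A) :
    toTower s f a (mkS p) = aeval ![AdjoinRoot.of _ (AdjoinRoot.root _), AdjoinRoot.root _] p :=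
  rfl

def ofTower : AdjoinRoot (fiberPoly s f a) →ₐ[A] SpectralAlgebra s f a :=
  AdjoinRoot.liftAlgHom _
    (AdjoinRoot.liftAlgHom _ (Algebra.ofId A _) (mkS (X 0)) (by simp [mk_X_zero_pow]))
    (mkS (X 1)) (by
      rw [fiberPoly, Polynomial.eval₂_monicWithCoeffs]
      simpa [mul_assoc] using mk_X_one_pow_add_sum s f a)

def equivTower : SpectralAlgebra s f a ≃ₐ[A] AdjoinRoot (fiberPoly s f a) :=
  AlgEquiv.ofAlgHom (toTower s f a) (ofTower s f a)
    (by ext <;> simp [ofTower, toTower_mk])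
    (Ideal.Quotient.algHom_ext A (MvPolynomial.algHom_ext fun i => by
      fin_cases i <;> simp [ofTower, toTower_mk]))

variable {s}

section Basis

variable [Nontrivial A] (hs : s ≠ 0)
include hs

def baseBasis : Module.Basis (Fin s) A (BaseRing s f) :=
  (AdjoinRoot.powerBasis' (Polynomial.monic_X_pow_sub_C f hs)).basis.reindex
    (finCongr ((AdjoinRoot.powerBasis'_dim _).trans Polynomial.natDegree_X_pow_sub_C))

theorem nontrivial_baseRing : Nontrivial (BaseRing s f) :=
  nontrivial_of_ne _ _ ((baseBasis f hs).ne_zero ⟨0, Nat.pos_of_ne_zero hs⟩)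

theorem natDegree_fiberPoly : (fiberPoly s f a).natDegree = r :=
  @Polynomial.natDegree_monicWithCoeffs _ _ (nontrivial_baseRing f hs) _ _

def fiberBasis : Module.Basis (Fin r) (BaseRing s f) (AdjoinRoot (fiberPoly s f a)) :=
  (AdjoinRoot.powerBasis' (monic_fiberPoly s f a)).basis.reindex
    (finCongr ((AdjoinRoot.powerBasis'_dim _).trans (natDegree_fiberPoly f a hs)))

theorem baseBasis_apply (i : Fin s) : baseBasis f hs i = AdjoinRoot.root _ ^ (i : ℕ) := by
  simp [baseBasis]

theorem fiberBasis_apply (j : Fin r) : fiberBasis f a hs j = AdjoinRoot.root _ ^ (j : ℕ) := by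
  rw [fiberBasis, Module.Basis.reindex_apply, PowerBasis.coe_basis, AdjoinRoot.powerBasis'_gen]
  rfl

def basis : Module.Basis (Fin s × Fin r) A (SpectralAlgebra s f a) :=
  ((baseBasis f hs).smulTower (fiberBasis f a hs)).map (equivTower s f a).symm.toLinearEquiv

theorem basis_apply (k : Fin s × Fin r) :
    basis f a hs k = mkS (X 0 ^ (k.1 : ℕ) * X 1 ^ (k.2 : ℕ)) := by
  obtain ⟨i, j⟩ := k
  rw [basis, Module.Basis.map_apply, Module.Basis.smulTower_apply]
  simp [baseBasis_apply, fiberBasis_apply, equivTower, ofTower, Algebra.smul_def]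

theorem basis_castLE (hrs : r ≤ s) (j : Fin r) :
    basis f a hs (Fin.castLE hrs j, j) = mkS (X 0 * X 1) ^ (j : ℕ) := by
  rw [basis_apply, map_mul, map_mul, mul_pow]
  rfl

end Basis

theorem aeval_mk_X_mul_X_monicWithCoeffs (hrs : r ≤ s) :
    Polynomial.aeval (mkS (X 0 * X 1)) (Polynomial.monicWithCoeffs fun i => a i * f) = 0 := by
  set x := mkS (X 0)
  set z := mkS (X 1)
  have hxs : x ^ s = algebraMap A _ f := mk_X_zero_pow s f a
  have hz : z ^ r + ∑ i : Fin r, algebraMap A _ (a i) * x ^ (s - ((i : ℕ) + 1)) *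
      z ^ (r - ((i : ℕ) + 1)) = 0 := mk_X_one_pow_add_sum s f a
  have hterm (i : Fin r) : algebraMap A _ (a i * f) * (x * z) ^ (r - ((i : ℕ) + 1)) =
      x ^ r * (algebraMap A _ (a i) * x ^ (s - ((i : ℕ) + 1)) * z ^ (r - ((i : ℕ) + 1))) := by
    have hx : x ^ r * x ^ (s - ((i : ℕ) + 1)) = x ^ (r - ((i : ℕ) + 1)) * x ^ s := by
      rw [← pow_add, ← pow_add]
      congr 1
      omega
    rw [map_mul, ← hxs]
    linear_combination -(algebraMap A _ (a i) * z ^ (r - ((i : ℕ) + 1))) * hx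
  rw [Polynomial.aeval_def, Polynomial.eval₂_monicWithCoeffs, map_mul,
    Finset.sum_congr rfl fun i _ => hterm i, mul_pow, ← Finset.mul_sum, ← mul_add, hz, mul_zero]

theorem ker_aeval_mk_X_mul_X [Nontrivial A] (hs : s ≠ 0) (hrs : r ≤ s) :
    RingHom.ker (Polynomial.aeval (mkS (X 0 * X 1))) =
      Ideal.span {Polynomial.monicWithCoeffs fun i => a i * f} := by
  refine Polynomial.ker_aeval_eq_span_of_linearIndependent (Polynomial.monic_monicWithCoeffs _)
    (Polynomial.natDegree_monicWithCoeffs _) (aeval_mk_X_mul_X_monicWithCoeffs f a hrs) ?_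
  have hinj : Function.Injective fun j : Fin r => (Fin.castLE hrs j, j) :=
    fun j k h => (Prod.ext_iff.1 h).2
  simpa [Function.comp_def, basis_castLE] using (basis f a hs).linearIndependent.comp _ hinj

section Scaling

variable {K : Type*} [Field K] [Algebra K A] (hrs : r ≤ s)

def scaling {ζ : K} (hζ : ζ ^ s = 1) : SpectralAlgebra s f a →ₐ[A] SpectralAlgebra s f a :=
  Ideal.quotientMapₐ _ (antidiagScaling K ζ)
    (spectralIdeal_le_comap_antidiagScaling s f a hrs hζ)

theorem scaling_mk {ζ : K} (hζ : ζ ^ s = 1) (p : MvPolynomial (Fin 2) A) :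
    scaling f a hrs hζ (mkS p) = mkS (antidiagScaling K ζ p) :=
  rfl

theorem scaling_aeval {ζ : K} (hζ : ζ ^ s = 1) (hζ₀ : ζ ≠ 0) (q : Polynomial A) :
    scaling f a hrs hζ (Polynomial.aeval (mkS (X 0 * X 1)) q) =
      Polynomial.aeval (mkS (X 0 * X 1)) q := by
  rw [← Polynomial.aeval_algHom_apply, scaling_mk, antidiagScaling_X_mul_X hζ₀]

variable [Nontrivial A] (hs : s ≠ 0)
include hs

theorem scaling_basis {ζ : K} (hζ : ζ ^ s = 1) (k : Fin s × Fin r) :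
    scaling f a hrs hζ (basis f a hs k) =
      algebraMap K A (ζ ^ (k.1 : ℕ) * ζ⁻¹ ^ (k.2 : ℕ)) • basis f a hs k := by
  rw [basis_apply, scaling_mk, antidiagScaling_X_pow_mul_X_pow, map_mul]
  exact (Algebra.smul_def (R := A) (A := SpectralAlgebra s f a) _ _).symm

theorem mem_range_aeval_of_scaling_eq {ζ : K} (hζ : IsPrimitiveRoot ζ s)
    {b : SpectralAlgebra s f a} (hb : scaling f a hrs hζ.pow_eq_one b = b) :
    b ∈ Set.range (Polynomial.aeval (R := A) (mkS (X 0 * X 1))) := by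
  set v := basis f a hs
  have hoff (k : Fin s × Fin r) (hk : (k.1 : ℕ) ≠ k.2) : v.repr b k = 0 :=
    v.repr_eq_zero_of_fixed_of_apply_eq_smul (φ := (scaling f a hrs hζ.pow_eq_one).toLinearMap)
      (scaling_basis f a hrs hs hζ.pow_eq_one) hb
      (hζ.isUnit_algebraMap_pow_mul_inv_pow_sub_one k.1.2 (k.2.2.trans_le hrs) hk)
  refine ⟨∑ j : Fin r,
    Polynomial.C (v.repr b (Fin.castLE hrs j, j)) * Polynomial.X ^ (j : ℕ), ?_⟩
  calc _ = ∑ j : Fin r, v.repr b (Fin.castLE hrs j, j) • v (Fin.castLE hrs j, j) := by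
        simp only [v, basis_castLE, map_sum, map_mul, map_pow, Polynomial.aeval_C,
          Polynomial.aeval_X]
        exact Finset.sum_congr rfl fun _ _ => (Algebra.smul_def _ _).symm
    _ = ∑ k, v.repr b k • v k := by
        refine Fintype.sum_of_injective _ (fun j k h => (Prod.ext_iff.1 h).2) _ _ (fun k hk => ?_)
          fun _ => rfl
        rw [hoff k fun h => hk ⟨k.2, Prod.ext (Fin.ext h.symm) rfl⟩, zero_smul]
    _ = b := v.sum_repr b

end Scaling

end SpectralAlgebra

end


theorem stmt5_general (A : Type*) [CommRing A] [Algebra ℂ A]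
    (r s : ℕ) (hs : 0 < s) (hrs : r ≤ s)
    (f : A) (a : Fin r → A)
    (I : Ideal (MvPolynomial (Fin 2) A))
    (hI : I = Ideal.span
      {X 1 ^ r + ∑ i : Fin r,
          C (a i) * X 0 ^ (s - ((i : ℕ) + 1)) * X 1 ^ (r - ((i : ℕ) + 1)),
        X 0 ^ s - C f})
    (σ : ℂ → (MvPolynomial (Fin 2) A →ₐ[A] MvPolynomial (Fin 2) A))
    (hσ : ∀ ζ : ℂ, σ ζ = aeval (fun i : Fin 2 =>
      if i = 0 then C (algebraMap ℂ A ζ) * X 0 else C (algebraMap ℂ A ζ⁻¹) * X 1))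
    (ψ : Polynomial A →ₐ[A] MvPolynomial (Fin 2) A ⧸ I)
    (hψ : ψ = Polynomial.aeval (Ideal.Quotient.mk I (X 0 * X 1)))
    (J : Ideal (Polynomial A))
    (hJ : J = Ideal.span
      {Polynomial.X ^ r + ∑ i : Fin r,
          Polynomial.C (a i * f) * Polynomial.X ^ (r - ((i : ℕ) + 1))}) :
    RingHom.ker ψ = J ∧
    Set.range ψ = {b : MvPolynomial (Fin 2) A ⧸ I |
      ∀ ζ : ℂ, ζ ^ s = 1 → ∀ p : MvPolynomial (Fin 2) A,
        Ideal.Quotient.mk I p = b → Ideal.Quotient.mk I (σ ζ p) = b} := by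
  rcases subsingleton_or_nontrivial A with hA | hA
  · have : Subsingleton (MvPolynomial (Fin 2) A ⧸ I) := Quotient.instSubsingletonQuotient _
    exact ⟨Subsingleton.elim _ _, Set.ext fun _ =>
      iff_of_true ⟨0, Subsingleton.elim _ _⟩ fun _ _ _ _ => Subsingleton.elim _ _⟩
  obtain rfl : σ = antidiagScaling ℂ := funext hσ
  obtain rfl : I = spectralIdeal s f a := hI
  subst hψ hJ
  refine ⟨SpectralAlgebra.ker_aeval_mk_X_mul_X f a hs.ne' hrs,
    Set.ext fun b => ⟨?_, fun hb => ?_⟩⟩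
  · rintro ⟨q, rfl⟩ ζ hζ p hp
    rw [← SpectralAlgebra.scaling_mk f a hrs hζ, hp]
    exact SpectralAlgebra.scaling_aeval f a hrs hζ (ne_zero_pow hs.ne' (by simp [hζ])) q
  · obtain ⟨p, rfl⟩ := Ideal.Quotient.mk_surjective b
    have hζ := Complex.isPrimitiveRoot_exp s hs.ne'
    refine SpectralAlgebra.mem_range_aeval_of_scaling_eq f a hrs hs.ne' hζ ?_
    rw [SpectralAlgebra.scaling_mk]
    exact hb _ hζ.pow_eq_one p rfl

/-- The local computation identifying the coarse moduli space of a spectral curve over a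
stacky curve: with `B = A[t,y]/(y^r + a_1 t^{s-1} y^{r-1} + ⋯ + a_r t^{s-r}, t^s − f)` and
the `μ_s`-action `ζ·t = ζt`, `ζ·y = ζ⁻¹y`, the `A`-algebra map
`A[w]/(w^r + a_1 f w^{r-1} + ⋯ + a_r f) → B`, `w ↦ t·y`, is injective with image exactly
the subalgebra of `μ_s`-invariants.  (Here `ψ : A[w] → B` is `w ↦ ty`; the kernel of `ψ`
being the ideal `J = (w^r + a_1 f w^{r-1} + ⋯ + a_r f)` says precisely that the induced map
on `A[w]/J` is well defined and injective, and `Set.range ψ` is its image.) -/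
theorem stmt5 (A : Type*) [CommRing A] [Algebra ℂ A]
    (r s : ℕ) (hr : 0 < r) (hs : 0 < s) (hrs : r ≤ s)
    (f : A) (a : Fin r → A)
    (I : Ideal (MvPolynomial (Fin 2) A))
    (hI : I = Ideal.span
      {X 1 ^ r + ∑ i : Fin r,
          C (a i) * X 0 ^ (s - ((i : ℕ) + 1)) * X 1 ^ (r - ((i : ℕ) + 1)),
        X 0 ^ s - C f})
    (σ : ℂ → (MvPolynomial (Fin 2) A →ₐ[A] MvPolynomial (Fin 2) A))
    (hσ : ∀ ζ : ℂ, σ ζ = aeval (fun i : Fin 2 =>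
      if i = 0 then C (algebraMap ℂ A ζ) * X 0 else C (algebraMap ℂ A ζ⁻¹) * X 1))
    (ψ : Polynomial A →ₐ[A] MvPolynomial (Fin 2) A ⧸ I)
    (hψ : ψ = Polynomial.aeval (Ideal.Quotient.mk I (X 0 * X 1)))
    (J : Ideal (Polynomial A))
    (hJ : J = Ideal.span
      {Polynomial.X ^ r + ∑ i : Fin r,
          Polynomial.C (a i * f) * Polynomial.X ^ (r - ((i : ℕ) + 1))}) :
    RingHom.ker ψ = J ∧
    Set.range ψ = {b : MvPolynomial (Fin 2) A ⧸ I |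
      ∀ ζ : ℂ, ζ ^ s = 1 → ∀ p : MvPolynomial (Fin 2) A,
        Ideal.Quotient.mk I p = b → Ideal.Quotient.mk I (σ ζ p) = b} :=
  stmt5_general A r s hs hrs f a I hI σ hσ ψ hψ J hJ
end
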